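/- (Corollary) Let n > 8 be convergent, let k = σ∞(n), and let q_0, …, q_k be the turtle walk driven by the binary encoding of n (rightmost bit processed first). Let G(n) be the simple graph on ℤ×ℤ whose edge set consists of the pairs {q_i, q_{i+1}} for 0 ≤ i < k. Then the girth of G(n) equals 4: G(n) contains a cycle of length 4 and contains no shorter cycle. -/
import Mathlib


/-- The accelerated Collatz map: `n/2` if `n` is even, `(3n+1)/2` if `n` is odd. -/
def T (n : ℕ) : ℕ := if n % 2 = 0 then n / 2 else (3 * n + 1) / 2

/-- `n` is convergent if some iterate of `T` starting at `n` equals `1`. -/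
def Convergent (n : ℕ) : Prop := ∃ k, T^[k] n = 1

/-- The total stopping time `σ∞(n)`: the least `k` with `T^[k] n = 1`. -/
noncomputable def sigma (n : ℕ) : ℕ := sInf {k | T^[k] n = 1}

/-- The `i`-th bit of the binary encoding of `n`:
`1` if `T^[i] n` is even, `0` if `T^[i] n` is odd. -/
def bit (i n : ℕ) : ℕ := if T^[i] n % 2 = 0 then 1 else 0

/-- Clockwise rotation by 90°: `ρ(x,y) = (y, -x)`. -/
def rho (d : ℤ × ℤ) : ℤ × ℤ := (d.2, -d.1)

/-- Counterclockwise rotation by 90°: `λ(x,y) = (-y, x)`. -/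
def lam (d : ℤ × ℤ) : ℤ × ℤ := (-d.2, d.1)

/-- The turtle's direction after processing the first `i` bits of `c`:
`d 0 = (1,0)`, and `d (i+1) = ρ (d i)` if `c i = 1`, `λ (d i)` if `c i = 0`. -/
def dirW (c : ℕ → ℕ) : ℕ → ℤ × ℤ
  | 0 => (1, 0)
  | i + 1 => if c i = 1 then rho (dirW c i) else lam (dirW c i)

/-- The turtle's position after processing the first `i` bits of `c`:
`q 0 = (0,0)` and `q (i+1) = q i + d (i+1)`. -/
def posW (c : ℕ → ℕ) : ℕ → ℤ × ℤ
  | 0 => (0, 0)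
  | i + 1 => posW c i + dirW c (i + 1)

/-- The Collatz curve of `n`, viewed as a simple graph on `ℤ × ℤ`: the edge set
consists of the pairs `{q i, q (i+1)}` for `0 ≤ i < σ∞(n)`, where `q` is the
turtle walk driven by the binary encoding of `n` (rightmost bit first). -/
noncomputable def curveGraph (n : ℕ) : SimpleGraph (ℤ × ℤ) :=
  SimpleGraph.fromEdgeSet
    {e | ∃ i < sigma n, e = s(posW (fun j => bit j n) i, posW (fun j => bit j n) (i + 1))}

lemma my_T_eq_one {m : ℕ} (h : T m = 1) : m = 2 := by unfold T at h; split at h <;> omega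
lemma my_T_eq_two {m : ℕ} (h : T m = 2) : m = 4 ∨ m = 1 := by unfold T at h; split at h <;> omega
lemma my_T_eq_four {m : ℕ} (h : T m = 4) : m = 8 := by unfold T at h; split at h <;> omega

lemma my_tail_vals (n : ℕ) (hn : 8 < n) (hc : Convergent n) :
    ∃ m, sigma n = m + 4 ∧ T^[m+1] n = 8 ∧ T^[m+2] n = 4 ∧ T^[m+3] n = 2 := by
  have hk : T^[sigma n] n = 1 := Nat.sInf_mem hc
  have hmin : ∀ j, T^[j] n = 1 → sigma n ≤ j := fun j hj => Nat.sInf_le hj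
  have hk1 : 1 ≤ sigma n := by
    rcases Nat.eq_zero_or_pos (sigma n) with h | h
    · rw [h] at hk; simp at hk; omega
    · exact h
  obtain ⟨j, hkj⟩ : ∃ j, sigma n = j + 1 := ⟨sigma n - 1, by omega⟩
  rw [hkj, Function.iterate_succ_apply'] at hk
  have h2 : T^[j] n = 2 := my_T_eq_one hk
  have hj1 : 1 ≤ j := by
    rcases Nat.eq_zero_or_pos j with h | h
    · rw [h] at h2; simp at h2; omega
    · exact h
  obtain ⟨i, rfl⟩ : ∃ i, j = i + 1 := ⟨j - 1, by omega⟩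
  rw [Function.iterate_succ_apply'] at h2
  have h4 : T^[i] n = 4 := by
    rcases my_T_eq_two h2 with h | h
    · exact h
    · exact absurd (hmin i h) (by omega)
  have hi1 : 1 ≤ i := by
    rcases Nat.eq_zero_or_pos i with h | h
    · rw [h] at h4; simp at h4; omega
    · exact h
  obtain ⟨l, rfl⟩ : ∃ l, i = l + 1 := ⟨i - 1, by omega⟩
  rw [Function.iterate_succ_apply'] at h4
  have h8 : T^[l] n = 8 := my_T_eq_four h4
  have hl1 : 1 ≤ l := by
    rcases Nat.eq_zero_or_pos l with h | h
    · rw [h] at h8; simp at h8; omega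
    · exact h
  obtain ⟨m, rfl⟩ : ∃ m, l = m + 1 := ⟨l - 1, by omega⟩
  refine ⟨m, by omega, h8, ?_, ?_⟩
  · rw [show m+2 = (m+1)+1 by rfl, Function.iterate_succ_apply']; exact h4
  · rw [show m+3 = (m+2)+1 by rfl, Function.iterate_succ_apply']; exact h2

lemma my_dir_unit (c : ℕ → ℕ) (i : ℕ) :
    dirW c i = (1,0) ∨ dirW c i = (0,1) ∨ dirW c i = (-1,0) ∨ dirW c i = (0,-1) := by
  induction i with
  | zero => left; rfl
  | succ i ih =>
    rw [dirW]
    rcases ih with h|h|h|h <;> rw [h] <;> split <;> simp [rho, lam]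

lemma my_walk_parity {G : SimpleGraph (ℤ×ℤ)}
    (hG : ∀ a b : ℤ×ℤ, G.Adj a b → (a.1+a.2) % 2 ≠ (b.1+b.2) % 2)
    {a b : ℤ×ℤ} (w : G.Walk a b) : (a.1+a.2+w.length) % 2 = (b.1+b.2) % 2 := by
  induction w with
  | nil => simp
  | @cons u v x h p ih =>
    have := hG u v h
    rw [SimpleGraph.Walk.length_cons]
    push_cast
    omega

lemma square_cycle {α : Type*} {G : SimpleGraph α} {A B C D : α}
    (e1 : G.Adj A B) (e2 : G.Adj B C) (e3 : G.Adj C D) (e4 : G.Adj D A)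
    (nAB : A ≠ B) (nAC : A ≠ C) (nAD : A ≠ D) (nBC : B ≠ C) (nBD : B ≠ D) (nCD : C ≠ D) :
    ∃ w : G.Walk A A, w.IsCycle ∧ w.length = 4 := by
  refine ⟨.cons e1 (.cons e2 (.cons e3 (.cons e4 .nil))), ?_, by simp⟩
  rw [SimpleGraph.Walk.isCycle_def]
  refine ⟨?_, by simp, ?_⟩
  · rw [SimpleGraph.Walk.isTrail_def]
    simp only [SimpleGraph.Walk.edges_cons, SimpleGraph.Walk.edges_nil,
      List.nodup_cons, List.mem_cons, List.not_mem_nil, or_false, List.mem_singleton,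
      List.nodup_nil, and_true, Sym2.eq_iff]
    push_neg
    tauto
  · simp only [SimpleGraph.Walk.support_cons, SimpleGraph.Walk.support_nil, List.tail_cons,
      List.nodup_cons, List.mem_cons, List.not_mem_nil, or_false, List.mem_singleton,
      List.nodup_nil, and_true]
    push_neg
    tauto


/-- Corollary: for convergent `n > 8`, the girth of the Collatz curve graph
`G(n)` equals `4`: it contains a cycle of length `4` and no shorter cycle. -/
theorem curveGraph_girth_eq_four (n : ℕ) (hn : 8 < n) (hc : Convergent n) :
    (curveGraph n).girth = 4 := by
  classical
  set c : ℕ → ℕ := fun j => bit j n with hcdef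
  -- each consecutive pair of positions is adjacent
  have hadj : ∀ i, i < sigma n → (curveGraph n).Adj (posW c i) (posW c (i+1)) := by
    intro i hi
    rw [curveGraph, SimpleGraph.fromEdgeSet_adj]
    refine ⟨⟨i, hi, rfl⟩, ?_⟩
    intro hcon
    rw [posW, left_eq_add] at hcon
    rcases my_dir_unit c (i+1) with h|h|h|h <;> rw [h] at hcon <;> simp [Prod.ext_iff] at hcon
  -- adjacency flips parity of coordinate sum
  have hflip : ∀ a b : ℤ×ℤ, (curveGraph n).Adj a b → (a.1+a.2) % 2 ≠ (b.1+b.2) % 2 := by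
    intro a b hab
    rw [curveGraph, SimpleGraph.fromEdgeSet_adj] at hab
    obtain ⟨⟨i, hi, he⟩, hne⟩ := hab
    simp only [← hcdef] at he
    rw [Sym2.eq_iff] at he
    have hstep : posW c (i+1) = posW c i + dirW c (i+1) := rfl
    rcases my_dir_unit c (i+1) with h|h|h|h <;>
      rcases he with ⟨rfl, rfl⟩|⟨rfl, rfl⟩ <;>
      simp only [hstep, h, Prod.fst_add, Prod.snd_add] <;> omega
  -- the tail of the trajectory: three even values ⇒ three right turns
  obtain ⟨m, hkm, h8, h4, h2⟩ := my_tail_vals n hn hc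
  have hb1 : c (m+1) = 1 := by simp [hcdef, bit, h8]
  have hb2 : c (m+2) = 1 := by simp [hcdef, bit, h4]
  have hb3 : c (m+3) = 1 := by simp [hcdef, bit, h2]
  have hd2 : dirW c (m+2) = rho (dirW c (m+1)) := by
    rw [show m+2 = (m+1)+1 from rfl, dirW, hb1]; simp
  have hd3 : dirW c (m+3) = rho (dirW c (m+2)) := by
    rw [show m+3 = (m+2)+1 from rfl, dirW, hb2]; simp
  have hd4 : dirW c (m+4) = rho (dirW c (m+3)) := by
    rw [show m+4 = (m+3)+1 from rfl, dirW, hb3]; simp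
  have hq1 : posW c (m+1) = posW c m + dirW c (m+1) := rfl
  have hq2 : posW c (m+2) = posW c (m+1) + dirW c (m+2) := rfl
  have hq3 : posW c (m+3) = posW c (m+2) + dirW c (m+3) := rfl
  have hq4' : posW c (m+4) = posW c (m+3) + dirW c (m+4) := rfl
  have hq4 : posW c (m+4) = posW c m := by
    simp only [hq4', hq3, hq2, hq1, hd4, hd3, hd2, rho, Prod.ext_iff, Prod.fst_add, Prod.snd_add]
    constructor <;> ring
  -- the 4-cycle
  have e1 : (curveGraph n).Adj (posW c m) (posW c (m+1)) := hadj m (by omega)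
  have e2 : (curveGraph n).Adj (posW c (m+1)) (posW c (m+2)) := hadj (m+1) (by omega)
  have e3 : (curveGraph n).Adj (posW c (m+2)) (posW c (m+3)) := hadj (m+2) (by omega)
  have e4 : (curveGraph n).Adj (posW c (m+3)) (posW c m) := by
    have := hadj (m+3) (by omega)
    rwa [show m+3+1 = m+4 from rfl, hq4] at this
  have hne : posW c m ≠ posW c (m+1) ∧ posW c m ≠ posW c (m+2) ∧ posW c m ≠ posW c (m+3) ∧
      posW c (m+1) ≠ posW c (m+2) ∧ posW c (m+1) ≠ posW c (m+3) ∧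
      posW c (m+2) ≠ posW c (m+3) := by
    rcases my_dir_unit c (m+1) with h|h|h|h <;>
      refine ⟨?_, ?_, ?_, ?_, ?_, ?_⟩ <;>
      simp only [hq3, hq2, hq1, hd3, hd2, h, rho, Prod.ext_iff, Prod.fst_add, Prod.snd_add,
        ne_eq, not_and] <;> intro hx <;> omega
  obtain ⟨n01, n02, n03, n12, n13, n23⟩ := hne
  obtain ⟨w, hcyc, hwlen⟩ := square_cycle e1 e2 e3 e4 n01 n02 n03 n12 n13 n23
  -- egirth = 4
  have hlow : (4 : ℕ∞) ≤ (curveGraph n).egirth := by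
    rw [SimpleGraph.le_egirth]
    intro a w' hw'
    have h3 := hw'.three_le_length
    have hpar := my_walk_parity hflip w'
    have h4' : 4 ≤ w'.length := by omega
    exact_mod_cast h4'
  have hup : (curveGraph n).egirth ≤ 4 := by
    have : (curveGraph n).egirth ≤ (w.length : ℕ∞) := by
      rw [SimpleGraph.egirth]
      exact iInf_le_of_le (posW c m) (iInf_le_of_le w (iInf_le _ hcyc))
    rwa [hwlen] at this
  have : (curveGraph n).egirth = 4 := le_antisymm hup hlow
  simp [SimpleGraph.girth, this]
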